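/- For every T > 0, ∫_ℝ ( ∫_0^T p_s(v) ds )² dv = 4(2 − √2) T^{3/2} / (3√π). -/

import Mathlib

open MeasureTheory intervalIntegral

noncomputable section

/-- The one-dimensional heat kernel `p_t(v) = (2πt)^{-1/2} exp(-v²/(2t))`. -/
def heat1 (t v : ℝ) : ℝ :=
  (2 * Real.pi * t) ^ (-(1 : ℝ) / 2) * Real.exp (-v ^ 2 / (2 * t))

namespace HeatAux

open Real Set

lemma measurable_heat1 : Measurable fun p : ℝ × ℝ => heat1 p.1 p.2 := by
  unfold heat1
  fun_prop

lemma heat1_nonneg {t : ℝ} (v : ℝ) (ht : 0 ≤ t) : 0 ≤ heat1 t v :=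
  mul_nonneg (Real.rpow_nonneg (by positivity) _) (Real.exp_nonneg _)

lemma heat1_le {t : ℝ} (v : ℝ) (ht : 0 ≤ t) :
    heat1 t v ≤ (2 * Real.pi * t) ^ (-(1 : ℝ) / 2) := by
  have h1 : Real.exp (-v ^ 2 / (2 * t)) ≤ 1 := by
    rw [Real.exp_le_one_iff]
    apply div_nonpos_of_nonpos_of_nonneg (neg_nonpos.2 (sq_nonneg v)) (by positivity)
  simpa [heat1] using mul_le_of_le_one_right (Real.rpow_nonneg (by positivity) _) h1

lemma rpow_split (c : ℝ) (hc : 0 < c) (s : ℝ) :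
    (c * s) ^ (-(1 : ℝ) / 2) = c ^ (-(1 : ℝ) / 2) * s ^ (-(1 : ℝ) / 2) := by
  rcases lt_trichotomy s 0 with h | h | h
  · have h1 : c * s < 0 := mul_neg_of_pos_of_neg hc h
    have hcos : Real.cos (-(1 : ℝ) / 2 * π) = 0 := by
      rw [show -(1 : ℝ) / 2 * π = -(π / 2) by ring, Real.cos_neg, Real.cos_pi_div_two]
    rw [Real.rpow_def_of_neg h1, Real.rpow_def_of_neg h, hcos]
    ring
  · simp [h, Real.zero_rpow (by norm_num : (-(1:ℝ)/2) ≠ 0)]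
  · exact Real.mul_rpow hc.le h.le

lemma rpow_neg_half_eq_inv_sqrt {x : ℝ} (hx : 0 ≤ x) :
    x ^ (-(1 : ℝ) / 2) = (Real.sqrt x)⁻¹ := by
  rw [Real.sqrt_eq_rpow, show (-(1:ℝ)/2) = -(1/2) by ring, Real.rpow_neg hx]

lemma heat1_mul_eq {s t : ℝ} (hs : s ≠ 0) (ht : t ≠ 0) :
    (fun v => heat1 s v * heat1 t v) = fun v =>
      (2 * π * s) ^ (-(1 : ℝ) / 2) * (2 * π * t) ^ (-(1 : ℝ) / 2) *
        Real.exp (-(1 / (2 * s) + 1 / (2 * t)) * v ^ 2) := by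
  funext v
  unfold heat1
  have : Real.exp (-v ^ 2 / (2 * s)) * Real.exp (-v ^ 2 / (2 * t)) =
      Real.exp (-(1 / (2 * s) + 1 / (2 * t)) * v ^ 2) := by
    rw [← Real.exp_add]; congr 1; field_simp; ring
  calc (2 * π * s) ^ (-(1:ℝ)/2) * Real.exp (-v ^ 2 / (2 * s)) *
        ((2 * π * t) ^ (-(1:ℝ)/2) * Real.exp (-v ^ 2 / (2 * t)))
      = (2 * π * s) ^ (-(1:ℝ)/2) * (2 * π * t) ^ (-(1:ℝ)/2) *
        (Real.exp (-v ^ 2 / (2 * s)) * Real.exp (-v ^ 2 / (2 * t))) := by ring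
    _ = _ := by rw [this]

lemma integrable_heat1_mul {s t : ℝ} (hs : 0 < s) (ht : 0 < t) :
    Integrable fun v => heat1 s v * heat1 t v := by
  rw [heat1_mul_eq hs.ne' ht.ne']
  exact (integrable_exp_neg_mul_sq (by positivity)).const_mul _

lemma integral_heat1_mul {s t : ℝ} (hs : 0 < s) (ht : 0 < t) :
    ∫ v : ℝ, heat1 s v * heat1 t v = (2 * π * (s + t)) ^ (-(1 : ℝ) / 2) := by
  rw [heat1_mul_eq hs.ne' ht.ne', MeasureTheory.integral_const_mul, integral_gaussian]
  have h1 : π / (1 / (2 * s) + 1 / (2 * t)) =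
      (2 * π * s) * (2 * π * t) / (2 * π * (s + t)) := by
    field_simp
    ring
  rw [h1, rpow_neg_half_eq_inv_sqrt (by positivity), rpow_neg_half_eq_inv_sqrt (by positivity),
    rpow_neg_half_eq_inv_sqrt (by positivity),
    Real.sqrt_div (by positivity), Real.sqrt_mul (by positivity)]
  have ha : Real.sqrt (2 * π * s) ≠ 0 := by positivity
  have hb : Real.sqrt (2 * π * t) ≠ 0 := by positivity
  have hc : Real.sqrt (2 * π * (s + t)) ≠ 0 := by positivity
  field_simp
  rw [← Real.sqrt_mul (by positivity : (0:ℝ) ≤ 2 * π),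
    ← Real.sqrt_mul (by positivity : (0:ℝ) ≤ 2 * π * s)]
  congr 1; ring

lemma heat1_eq_gauss {s : ℝ} (hs : s ≠ 0) :
    (fun v => heat1 s v) = fun v =>
      (2 * π * s) ^ (-(1 : ℝ) / 2) * Real.exp (-(1 / (2 * s)) * v ^ 2) := by
  funext v
  unfold heat1
  congr 1
  congr 1
  field_simp

lemma integrable_heat1 {s : ℝ} (hs : 0 < s) : Integrable fun v => heat1 s v := by
  rw [heat1_eq_gauss hs.ne']
  exact (integrable_exp_neg_mul_sq (by positivity)).const_mul _

lemma integral_heat1 {s : ℝ} (hs : 0 < s) : ∫ v : ℝ, heat1 s v = 1 := by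
  rw [heat1_eq_gauss hs.ne', MeasureTheory.integral_const_mul, integral_gaussian]
  have h1 : π / (1 / (2 * s)) = 2 * π * s := by field_simp
  rw [h1, rpow_neg_half_eq_inv_sqrt (by positivity)]
  exact inv_mul_cancel₀ (by positivity)

/-- The bound constant. -/
def bnd (T : ℝ) : ℝ := ∫ s in Ioc (0:ℝ) T, (2 * π * s) ^ (-(1 : ℝ) / 2)

lemma integrableOn_bound {T : ℝ} (hT : 0 < T) :
    IntegrableOn (fun s : ℝ => (2 * π * s) ^ (-(1 : ℝ) / 2)) (Ioc 0 T) := by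
  have h1 : IntervalIntegrable (fun s : ℝ => s ^ (-(1:ℝ)/2)) volume 0 T :=
    intervalIntegrable_rpow' (by norm_num)
  have h2 : IntervalIntegrable (fun s : ℝ => (2 * π * s) ^ (-(1:ℝ)/2)) volume 0 T := by
    have := h1.const_mul ((2 * π) ^ (-(1:ℝ)/2))
    apply this.congr
    intro s _; exact (rpow_split (2 * π) (by positivity) s).symm
  exact h2.1

lemma integrableOn_heat1_s {T : ℝ} (hT : 0 < T) (v : ℝ) :
    IntegrableOn (fun s => heat1 s v) (Ioc 0 T) := by
  apply Integrable.mono' (integrableOn_bound hT)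
  · exact (measurable_heat1.comp (measurable_id.prodMk measurable_const)).aestronglyMeasurable
  · filter_upwards [ae_restrict_mem measurableSet_Ioc] with s hs
    rw [Real.norm_eq_abs, abs_of_nonneg (heat1_nonneg v hs.1.le)]
    exact heat1_le v hs.1.le

/-- The time integral of the heat kernel. -/
def F (T v : ℝ) : ℝ := ∫ s in Ioc (0:ℝ) T, heat1 s v

lemma F_nonneg (T v : ℝ) : 0 ≤ F T v :=
  setIntegral_nonneg measurableSet_Ioc fun s hs => heat1_nonneg v hs.1.le

lemma F_le {T : ℝ} (hT : 0 < T) (v : ℝ) : F T v ≤ bnd T := by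
  apply integral_mono_of_nonneg
  · filter_upwards [ae_restrict_mem measurableSet_Ioc] with s hs using heat1_nonneg v hs.1.le
  · exact integrableOn_bound hT
  · filter_upwards [ae_restrict_mem measurableSet_Ioc] with s hs using heat1_le v hs.1.le

lemma measurable_F (T : ℝ) : StronglyMeasurable (F T) :=
  StronglyMeasurable.integral_prod_left (μ := volume.restrict (Ioc (0:ℝ) T))
    measurable_heat1.stronglyMeasurable

lemma swap_general {T C : ℝ} {g : ℝ → ℝ}
    (hgm : Measurable g) (hgnn : ∀ v, 0 ≤ g v) (hgC : ∀ v, g v ≤ C) :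
    ∫ v : ℝ, F T v * g v = ∫ t in Ioc (0:ℝ) T, ∫ v : ℝ, heat1 t v * g v := by
  have hunc : AEStronglyMeasurable (Function.uncurry fun t v => heat1 t v * g v)
      ((volume.restrict (Ioc (0:ℝ) T)).prod volume) :=
    (measurable_heat1.mul (hgm.comp measurable_snd)).aestronglyMeasurable
  have hint : Integrable (Function.uncurry fun t v => heat1 t v * g v)
      ((volume.restrict (Ioc (0:ℝ) T)).prod volume) := by
    rw [integrable_prod_iff hunc]
    constructor
    · filter_upwards [ae_restrict_mem measurableSet_Ioc] with t ht
      have h1 : Integrable fun v => g v * heat1 t v :=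
        (integrable_heat1 ht.1).bdd_mul hgm.aestronglyMeasurable
          (Filter.Eventually.of_forall fun v => by rw [Real.norm_eq_abs, abs_of_nonneg (hgnn v)]; exact hgC v)
      exact h1.congr (Filter.Eventually.of_forall fun v => mul_comm _ _)
    · apply Integrable.mono' (g := fun _ => C)
        (integrableOn_const (C := C) (s := Ioc (0:ℝ) T) (μ := volume) measure_Ioc_lt_top.ne)
      · exact hunc.norm.integral_prod_right'
      · filter_upwards [ae_restrict_mem measurableSet_Ioc] with t ht
        simp only [Function.uncurry_apply_pair]
        have hnn : 0 ≤ ∫ v : ℝ, ‖heat1 t v * g v‖ := integral_nonneg fun v => norm_nonneg _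
        rw [Real.norm_eq_abs, abs_of_nonneg hnn]
        have heq : ∫ v : ℝ, ‖heat1 t v * g v‖ = ∫ v : ℝ, heat1 t v * g v :=
          integral_congr_ae (.of_forall fun v =>
            norm_of_nonneg (mul_nonneg (heat1_nonneg v ht.1.le) (hgnn v)))
        rw [heq]
        calc ∫ v : ℝ, heat1 t v * g v ≤ ∫ v : ℝ, heat1 t v * C := by
              apply integral_mono_of_nonneg
              · exact .of_forall fun v => mul_nonneg (heat1_nonneg v ht.1.le) (hgnn v)
              · exact (integrable_heat1 ht.1).mul_const C
              · exact .of_forall fun v =>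
                  mul_le_mul_of_nonneg_left (hgC v) (heat1_nonneg v ht.1.le)
          _ = C := by rw [MeasureTheory.integral_mul_const, integral_heat1 ht.1, one_mul]
  calc ∫ v : ℝ, F T v * g v = ∫ v : ℝ, ∫ t in Ioc (0:ℝ) T, heat1 t v * g v := by
        refine integral_congr_ae (Filter.Eventually.of_forall fun v => ?_)
        exact (MeasureTheory.integral_mul_const (g v) fun t => heat1 t v).symm
    _ = _ := (integral_integral_swap hint).symm

lemma inner_calc {s T : ℝ} (hT : 0 < T) :
    ∫ t in Ioc (0:ℝ) T, (2 * π * (s + t)) ^ (-(1 : ℝ) / 2)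
      = (2 * π) ^ (-(1 : ℝ) / 2) * (2 * (s + T) ^ ((1:ℝ)/2) - 2 * s ^ ((1:ℝ)/2)) := by
  rw [← intervalIntegral.integral_of_le hT.le]
  simp_rw [rpow_split (2 * π) (by positivity)]
  rw [intervalIntegral.integral_const_mul]
  congr 1
  have h2 : (∫ t in (0:ℝ)..T, (s + t) ^ (-(1:ℝ)/2)) = ∫ u in s..(s+T), u ^ (-(1:ℝ)/2) := by
    simpa using intervalIntegral.integral_comp_add_left (a := 0) (b := T)
      (fun u : ℝ => u ^ (-(1:ℝ)/2)) s
  rw [h2, integral_rpow (Or.inl (by norm_num)), show (-(1:ℝ)/2 + 1) = (1:ℝ)/2 by norm_num]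
  ring

lemma outer_calc {T : ℝ} (hT : 0 < T) :
    ∫ s in Ioc (0:ℝ) T,
        (2 * π) ^ (-(1 : ℝ) / 2) * (2 * (s + T) ^ ((1:ℝ)/2) - 2 * s ^ ((1:ℝ)/2))
      = (2 * π) ^ (-(1 : ℝ) / 2) *
          (2 * (((T+T) ^ ((3:ℝ)/2) - T ^ ((3:ℝ)/2)) / ((3:ℝ)/2))
            - 2 * (T ^ ((3:ℝ)/2) / ((3:ℝ)/2))) := by
  rw [← intervalIntegral.integral_of_le hT.le, intervalIntegral.integral_const_mul]
  congr 1
  have hA : IntervalIntegrable (fun s : ℝ => (s + T) ^ ((1:ℝ)/2)) volume 0 T := by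
    have := (intervalIntegrable_rpow' (r := (1:ℝ)/2) (by norm_num)
      (a := T) (b := T + T)).comp_add_right T
    simpa using this
  have hB : IntervalIntegrable (fun s : ℝ => s ^ ((1:ℝ)/2)) volume 0 T :=
    intervalIntegrable_rpow' (by norm_num)
  rw [intervalIntegral.integral_sub (hA.const_mul 2) (hB.const_mul 2),
    intervalIntegral.integral_const_mul, intervalIntegral.integral_const_mul]
  have hA' : (∫ s in (0:ℝ)..T, (s + T) ^ ((1:ℝ)/2))
      = ((T+T) ^ ((3:ℝ)/2) - T ^ ((3:ℝ)/2)) / ((3:ℝ)/2) := by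
    have h2 : (∫ s in (0:ℝ)..T, (s + T) ^ ((1:ℝ)/2)) = ∫ u in T..(T+T), u ^ ((1:ℝ)/2) := by
      simpa using intervalIntegral.integral_comp_add_right (a := 0) (b := T)
        (fun u : ℝ => u ^ ((1:ℝ)/2)) T
    rw [h2, integral_rpow (Or.inl (by norm_num)), show ((1:ℝ)/2 + 1) = (3:ℝ)/2 by norm_num]
  have hB' : (∫ s in (0:ℝ)..T, s ^ ((1:ℝ)/2)) = T ^ ((3:ℝ)/2) / ((3:ℝ)/2) := by
    rw [integral_rpow (Or.inl (by norm_num)), show ((1:ℝ)/2 + 1) = (3:ℝ)/2 by norm_num,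
      Real.zero_rpow (by norm_num), sub_zero]
  rw [hA', hB']

lemma final_algebra {T : ℝ} (hT : 0 < T) :
    (2 * π) ^ (-(1 : ℝ) / 2) *
        (2 * (((T+T) ^ ((3:ℝ)/2) - T ^ ((3:ℝ)/2)) / ((3:ℝ)/2)) - 2 * (T ^ ((3:ℝ)/2) / ((3:ℝ)/2)))
      = 4 * (2 - Real.sqrt 2) * T ^ ((3:ℝ)/2) / (3 * Real.sqrt π) := by
  have h1 : ((2:ℝ)) ^ ((3:ℝ)/2) = 2 * Real.sqrt 2 := by
    rw [show (3:ℝ)/2 = 1 + 1/2 by norm_num, Real.rpow_add two_pos, Real.rpow_one,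
      ← Real.sqrt_eq_rpow]
  have h2 : (T + T) ^ ((3:ℝ)/2) = 2 * Real.sqrt 2 * T ^ ((3:ℝ)/2) := by
    rw [show T + T = 2 * T by ring, Real.mul_rpow (by norm_num) hT.le, h1]
  have h3 : (2 * π) ^ (-(1:ℝ)/2) = (Real.sqrt 2 * Real.sqrt π)⁻¹ := by
    rw [rpow_neg_half_eq_inv_sqrt (by positivity), Real.sqrt_mul (by norm_num)]
  rw [h2, h3]
  have ha : Real.sqrt 2 * Real.sqrt 2 = 2 := Real.mul_self_sqrt (by norm_num)
  have ha0 : Real.sqrt 2 ≠ 0 := by positivity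
  have hb0 : Real.sqrt π ≠ 0 := by positivity
  field_simp
  linear_combination 4 * ha

end HeatAux

open HeatAux Set Real in
theorem integral_sq_time_integral_heat_kernel (T : ℝ) (hT : 0 < T) :
    ∫ v : ℝ, (∫ s in (0 : ℝ)..T, heat1 s v) ^ 2
      = 4 * (2 - Real.sqrt 2) * T ^ ((3 : ℝ) / 2) / (3 * Real.sqrt Real.pi) := by
  calc ∫ v : ℝ, (∫ s in (0 : ℝ)..T, heat1 s v) ^ 2
      = ∫ v : ℝ, F T v * F T v := by
        refine integral_congr_ae (Filter.Eventually.of_forall fun v => ?_)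
        show (∫ s in (0 : ℝ)..T, heat1 s v) ^ 2 = F T v * F T v
        rw [intervalIntegral.integral_of_le hT.le, pow_two]
        rfl
    _ = ∫ t in Ioc (0:ℝ) T, ∫ v : ℝ, heat1 t v * F T v :=
        swap_general (measurable_F T).measurable (F_nonneg T) (F_le hT)
    _ = ∫ s in Ioc (0:ℝ) T, ∫ t in Ioc (0:ℝ) T, (2 * π * (s + t)) ^ (-(1 : ℝ) / 2) := by
        refine setIntegral_congr_fun measurableSet_Ioc fun s hs => ?_
        calc ∫ v : ℝ, heat1 s v * F T v = ∫ v : ℝ, F T v * heat1 s v :=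
              integral_congr_ae (.of_forall fun v => mul_comm _ _)
          _ = ∫ t in Ioc (0:ℝ) T, ∫ v : ℝ, heat1 t v * heat1 s v :=
              swap_general (measurable_heat1.comp (measurable_const.prodMk measurable_id))
                (fun v => heat1_nonneg v hs.1.le) (fun v => heat1_le v hs.1.le)
          _ = ∫ t in Ioc (0:ℝ) T, (2 * π * (s + t)) ^ (-(1 : ℝ) / 2) := by
              refine setIntegral_congr_fun measurableSet_Ioc fun t ht => ?_
              rw [integral_heat1_mul ht.1 hs.1, add_comm t s]
    _ = ∫ s in Ioc (0:ℝ) T,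
          (2 * π) ^ (-(1 : ℝ) / 2) * (2 * (s + T) ^ ((1:ℝ)/2) - 2 * s ^ ((1:ℝ)/2)) :=
        setIntegral_congr_fun measurableSet_Ioc fun s hs => inner_calc hT
    _ = (2 * π) ^ (-(1 : ℝ) / 2) *
          (2 * (((T+T) ^ ((3:ℝ)/2) - T ^ ((3:ℝ)/2)) / ((3:ℝ)/2))
            - 2 * (T ^ ((3:ℝ)/2) / ((3:ℝ)/2))) := outer_calc hT
    _ = 4 * (2 - Real.sqrt 2) * T ^ ((3 : ℝ) / 2) / (3 * Real.sqrt Real.pi) :=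
        final_algebra hT
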